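/- Let $M$ be a rank-$k$ matrix with SVD $M = \sum_{j=1}^k \sigma_j u_j v_j^T$ ($\sigma_1 \geq \dots \geq \sigma_k > 0$), let $E$ be any matrix of the same dimensions, and let $\hat M = M + E$ with right singular vectors $\hat v_1,\dots$. For $1 \leq a \leq b \leq k$, write $V_{a:b} = (v_a,\dots,v_b)$, $\hat V_{a:b} = (\hat v_a,\dots,\hat v_b)$, $V = (v_1,\dots,v_k)$, and $g_{a:b} = \min\{\sigma_{a-1} - \sigma_a, \sigma_b - \sigma_{b+1}\}$ (with $\sigma_0 = +\infty$, $\sigma_{k+1} = 0$). Define $S_{a:b} = (I - VV^T)(\hat V_{a:b}\hat V_{a:b}^T - V_{a:b}V_{a:b}^T)V_{a:b} - \sum_{j=a}^b \frac{1}{\sigma_j}(I - VV^T)E^T u_j v_j^T V_{a:b}$. Then $\|S_{a:b}\|_{op} \leq \left(\frac{32(\sigma_a - \sigma_b)}{\pi g_{a:b}} + 16\right) \frac{\|E\|_{op}^2}{g_{a:b}^2}$. -/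

import Mathlib

open Matrix Finset

noncomputable def vnorm {ι : Type*} [Fintype ι] (v : ι → ℝ) : ℝ :=
  Real.sqrt (∑ i, v i ^ 2)

noncomputable def opNorm {m n : Type*} [Fintype m] [Fintype n]
    (A : Matrix m n ℝ) : ℝ :=
  ⨆ v : {v : n → ℝ // vnorm v ≤ 1}, vnorm (A.mulVec v)

/-!
Write `F = ∑_{j=a}^b σⱼ⁻¹ uⱼ vⱼᵀ` and `F̂` for the same sum over the singular triples of `M + E`.
Since `(I - VVᵀ) Mᵀ = 0` and `V̂_{a:b} V̂_{a:b}ᵀ = (M + E)ᵀ F̂`, the remainder is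
`S = (I - VVᵀ) Eᵀ (F̂ - F) V_{a:b}`, and
`F̂ - F = (I - U_{a:b}U_{a:b}ᵀ) F̂ - F (I - V̂_{a:b}V̂_{a:b}ᵀ) - F Eᵀ F̂`.
The two projector terms are Wedin sin θ quantities, each at most `2‖E‖ / (g - ‖E‖)`: Weyl's
inequality separates the singular values of `M` and `M + E`, and a Sylvester equation between
their Gram matrices bounds the sin θ in one step. Hence `‖S‖ ≤ 5‖E‖² / (g - ‖E‖)² ≤ 16‖E‖² / g²`
when `‖E‖ ≤ g / 3`, while for larger `E` the crude bound `‖S‖ ≤ 1 + ‖E‖ / g` is already below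
`16‖E‖² / g²`.
-/

open scoped Matrix.Norms.L2Operator

section L2OpNorm

open WithLp

lemma vnorm_eq_norm_toLp {n : Type*} [Fintype n] (v : n → ℝ) : vnorm v = ‖toLp 2 v‖ := by
  simp [vnorm, EuclideanSpace.norm_eq, Real.norm_eq_abs, sq_abs]

lemma opNorm_eq_l2_opNorm {m n : Type*} [Fintype m] [Fintype n] [DecidableEq n]
    (A : Matrix m n ℝ) : opNorm A = ‖A‖ := by
  rw [l2_opNorm_def, ← ContinuousLinearMap.sSup_unitClosedBall_eq_norm, opNorm, iSup]
  congr 1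
  ext r
  simp only [Set.mem_range, Set.mem_image, Metric.mem_closedBall, dist_zero_right,
    Subtype.exists, vnorm_eq_norm_toLp]
  constructor
  · rintro ⟨v, hv, rfl⟩
    exact ⟨toLp 2 v, hv, rfl⟩
  · rintro ⟨x, hx, rfl⟩
    exact ⟨ofLp x, hx, rfl⟩

lemma norm_toLp_sq {n : Type*} [Fintype n] (y : n → ℝ) : ‖toLp 2 y‖ ^ 2 = y ⬝ᵥ y := by
  rw [EuclideanSpace.real_norm_sq_eq]
  simp only [dotProduct, sq]

variable {m n l : Type*} [Fintype m] [Fintype n] [Fintype l] [DecidableEq n]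

lemma l2_opNorm_transpose [DecidableEq m] (A : Matrix m n ℝ) : ‖Aᵀ‖ = ‖A‖ := by
  rw [← conjTranspose_eq_transpose_of_trivial, l2_opNorm_conjTranspose]

lemma l2_opNorm_transpose_mul_self (A : Matrix m n ℝ) : ‖Aᵀ * A‖ = ‖A‖ * ‖A‖ := by
  rw [← conjTranspose_eq_transpose_of_trivial, l2_opNorm_conjTranspose_mul_self]

lemma l2_opNorm_le_one_of_transpose_mul_self_eq_self {A : Matrix n n ℝ} (h : Aᵀ * A = A) :
    ‖A‖ ≤ 1 := by
  have h' := l2_opNorm_transpose_mul_self A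
  rw [h] at h'
  nlinarith [norm_nonneg A]

lemma l2_opNorm_le_one_of_transpose_mul_self_eq_one {A : Matrix m n ℝ} (h : Aᵀ * A = 1) :
    ‖A‖ ≤ 1 := by
  have h' := l2_opNorm_transpose_mul_self A
  have h1 : ‖(1 : Matrix n n ℝ)‖ ≤ 1 := l2_opNorm_le_one_of_transpose_mul_self_eq_self (by simp)
  rw [h] at h'
  nlinarith [norm_nonneg A]

lemma l2_opNorm_mul_le_of_le [DecidableEq l] {A : Matrix m n ℝ} {B : Matrix n l ℝ} {a b : ℝ}
    (hA : ‖A‖ ≤ a) (hB : ‖B‖ ≤ b) : ‖A * B‖ ≤ a * b :=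
  (l2_opNorm_mul A B).trans (mul_le_mul hA hB (norm_nonneg _) ((norm_nonneg _).trans hA))

lemma norm_toLp_mulVec_le (A : Matrix m n ℝ) (y : n → ℝ) :
    ‖toLp 2 (A *ᵥ y)‖ ≤ ‖A‖ * ‖toLp 2 y‖ :=
  A.l2_opNorm_mulVec (toLp 2 y)

lemma norm_toLp_mulVec_of_transpose_mul_self_eq_one {B : Matrix m n ℝ} (hB : Bᵀ * B = 1)
    (y : n → ℝ) : ‖toLp 2 (B *ᵥ y)‖ = ‖toLp 2 y‖ := by
  refine (sq_eq_sq₀ (norm_nonneg _) (norm_nonneg _)).1 ?_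
  rw [norm_toLp_sq, norm_toLp_sq, dotProduct_mulVec, ← mulVec_transpose, mulVec_mulVec, hB,
    one_mulVec, dotProduct_comm]

lemma mul_norm_toLp_le_diagonal_mulVec {d : n → ℝ} {t : ℝ} (ht : 0 ≤ t) (hd : ∀ i, t ≤ d i)
    (y : n → ℝ) : t * ‖toLp 2 y‖ ≤ ‖toLp 2 (diagonal d *ᵥ y)‖ := by
  refine le_of_pow_le_pow_left₀ two_ne_zero (norm_nonneg _) ?_
  rw [mul_pow, EuclideanSpace.real_norm_sq_eq, EuclideanSpace.real_norm_sq_eq, Finset.mul_sum]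
  gcongr with i
  rw [ofLp_toLp, ofLp_toLp, mulVec_diagonal, mul_pow]
  gcongr
  exact hd i

end L2OpNorm

lemma Matrix.exists_ne_zero_mulVec_eq_zero {m n K : Type*} [Fintype m] [Fintype n] [Field K]
    {A : Matrix m n K} (h : Fintype.card m < Fintype.card n) : ∃ y ≠ 0, A *ᵥ y = 0 := by
  have hker : LinearMap.ker A.mulVecLin ≠ ⊥ :=
    LinearMap.ker_ne_bot_of_finrank_lt (by simpa using h)
  obtain ⟨y, hy, hy0⟩ := (Submodule.ne_bot_iff _).1 hker
  exact ⟨y, hy0, hy⟩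

lemma le_div_sub_of_le_sq_div_sq_mul_add {y ε s t : ℝ} (hs : 0 ≤ s) (hst : s < t)
    (h : y ≤ s ^ 2 / t ^ 2 * y + ε * (s / t ^ 2 + 1 / t)) : y ≤ ε / (t - s) := by
  have ht : 0 < t := hs.trans_lt hst
  rw [le_div_iff₀ (sub_pos.2 hst)]
  have h' : t ^ 2 * y ≤ s ^ 2 * y + ε * (s + t) := by
    have e : t ^ 2 * (s ^ 2 / t ^ 2 * y + ε * (s / t ^ 2 + 1 / t)) = s ^ 2 * y + ε * (s + t) := by
      field_simp
    exact e ▸ mul_le_mul_of_nonneg_left h (sq_nonneg t)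
  nlinarith

section RankOneSum

variable {m n l : Type*}

def OrthonormalOn [Fintype n] (s : Finset ℕ) (w : ℕ → n → ℝ) : Prop :=
  ∀ i ∈ s, ∀ j ∈ s, w i ⬝ᵥ w j = if i = j then 1 else 0

lemma OrthonormalOn.mono [Fintype n] {s t : Finset ℕ} {w : ℕ → n → ℝ} (hw : OrthonormalOn t w)
    (hst : s ⊆ t) : OrthonormalOn s w :=
  fun i hi j hj => hw i (hst hi) j (hst hj)

def rankOneSum (s : Finset ℕ) (c : ℕ → ℝ) (w : ℕ → m → ℝ) (x : ℕ → n → ℝ) : Matrix m n ℝ :=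
  ∑ i ∈ s, c i • vecMulVec (w i) (x i)

def basisVec (s : Finset ℕ) (i : ℕ) : s → ℝ := fun j => if (j : ℕ) = i then 1 else 0

/-- `𝐏[s, w] = ∑_{i ∈ s} w i (w i)ᵀ`, and `𝐂[s, w]` is the matrix with columns `w i`, `i ∈ s`. -/
notation "𝐏[" s ", " w "]" => rankOneSum s (fun _ => 1) w w
notation "𝐂[" s ", " w "]" => rankOneSum s (fun _ => 1) w (basisVec s)

variable {s t : Finset ℕ} {c d e : ℕ → ℝ} {w : ℕ → m → ℝ} {x : ℕ → n → ℝ} {z : ℕ → l → ℝ}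

lemma rankOneSum_transpose : (rankOneSum s c w x)ᵀ = rankOneSum s c x w := by
  simp [rankOneSum, transpose_sum]

@[simp]
lemma rankOneSum_empty : rankOneSum ∅ c w x = 0 := sum_empty

lemma rankOneSum_congr (h : ∀ i ∈ s, c i = d i) : rankOneSum s c w x = rankOneSum s d w x :=
  sum_congr rfl fun i hi => by rw [h i hi]

lemma rankOneSum_sdiff_add (hst : s ⊆ t) :
    rankOneSum (t \ s) c w x + rankOneSum s c w x = rankOneSum t c w x :=
  sum_sdiff hst

lemma rankOneSum_mulVec [Fintype n] (y : n → ℝ) :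
    rankOneSum s c w x *ᵥ y = ∑ i ∈ s, (c i * (x i ⬝ᵥ y)) • w i := by
  simp [rankOneSum, sum_mulVec, smul_mulVec, vecMulVec_mulVec, mul_smul]

lemma mul_rankOneSum_mul [Fintype m] [Fintype n] {k l' : Type*} (X : Matrix k m ℝ)
    (Y : Matrix n l' ℝ) :
    X * rankOneSum s c w x * Y = ∑ i ∈ s, c i • (X * vecMulVec (w i) (x i) * Y) := by
  simp only [rankOneSum, Matrix.mul_sum, Matrix.sum_mul, Matrix.mul_smul, Matrix.smul_mul]

lemma rankOneSum_mul_rankOneSum [Fintype n] {r : Finset ℕ} (hx : OrthonormalOn r x)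
    (hs : s ⊆ r) (ht : t ⊆ r) :
    rankOneSum s c w x * rankOneSum t d x z = rankOneSum (s ∩ t) (fun i => c i * d i) w z := by
  simp only [rankOneSum, Matrix.sum_mul, ← sum_ite_mem]
  refine sum_congr rfl fun i hi => ?_
  simp only [Matrix.mul_sum, Matrix.smul_mul, Matrix.mul_smul, vecMulVec_mul_vecMulVec]
  rw [sum_congr rfl fun j hj => by rw [hx i (hs hi) j (ht hj)],
    ← sum_ite_eq t i fun j => (c j * d j) • vecMulVec (w j) (z j)]
  refine sum_congr rfl fun j _ => ?_
  split_ifs with h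
  · simp [h, smul_smul, mul_comm]
  · ext
    simp [vecMulVec_apply]

lemma rankOneSum_mul_rankOneSum_of_subset [Fintype n] (hst : s ⊆ t) (hx : OrthonormalOn t x)
    (h : ∀ i ∈ s, c i * d i = e i) :
    rankOneSum s c w x * rankOneSum t d x z = rankOneSum s e w z := by
  rw [rankOneSum_mul_rankOneSum hx hst subset_rfl, inter_eq_left.2 hst]
  exact rankOneSum_congr h

lemma rankOneSum_mul_rankOneSum_of_superset [Fintype n] (hts : t ⊆ s) (hx : OrthonormalOn s x)
    (h : ∀ i ∈ t, c i * d i = e i) :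
    rankOneSum s c w x * rankOneSum t d x z = rankOneSum t e w z := by
  rw [rankOneSum_mul_rankOneSum hx subset_rfl hts, inter_eq_right.2 hts]
  exact rankOneSum_congr h

lemma one_sub_rankOneSum_mul_rankOneSum_eq_zero [Fintype n] [DecidableEq n]
    (hx : OrthonormalOn t x) (hst : s ⊆ t) : (1 - 𝐏[t, x]) * rankOneSum s c x z = 0 := by
  rw [Matrix.sub_mul, Matrix.one_mul,
    rankOneSum_mul_rankOneSum_of_superset hst hx fun _ _ => one_mul _, sub_self]

lemma basisVec_dotProduct {i : ℕ} (hi : i ∈ s) (y : s → ℝ) : basisVec s i ⬝ᵥ y = y ⟨i, hi⟩ := by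
  rw [dotProduct, sum_eq_single ⟨i, hi⟩]
  · simp [basisVec]
  · intro j _ hj
    simp [basisVec, Subtype.ext_iff.not.1 hj]
  · simp

lemma orthonormalOn_basisVec (s : Finset ℕ) : OrthonormalOn s (basisVec s) := by
  intro i hi j _
  simp [basisVec_dotProduct hi, basisVec]

lemma eq_colMatrix {W : Matrix m s ℝ} (hW : ∀ r i, W r i = w i r) : W = 𝐂[s, w] := by
  ext r i
  simp [rankOneSum, Matrix.sum_apply, basisVec, hW, vecMulVec_apply]

lemma rankOneSum_basisVec_basisVec :
    rankOneSum s c (basisVec s) (basisVec s) = diagonal fun i : s => c i := by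
  ext i j
  rw [rankOneSum, Matrix.sum_apply, sum_eq_single i.1]
  · by_cases hij : i = j
    · simp [hij, basisVec, vecMulVec_apply]
    · simp [basisVec, vecMulVec_apply, hij, Ne.symm (Subtype.ext_iff.not.1 hij)]
  · intro k _ hk
    simp [basisVec, vecMulVec_apply, Ne.symm hk]
  · simp

lemma transpose_colMatrix_mul_self [Fintype m] (hw : OrthonormalOn s w) :
    (𝐂[s, w])ᵀ * 𝐂[s, w] = 1 := by
  rw [rankOneSum_transpose, rankOneSum_mul_rankOneSum_of_subset subset_rfl hw fun _ _ => one_mul 1,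
    rankOneSum_basisVec_basisVec, diagonal_one]

lemma colMatrix_mul_transpose : 𝐂[s, w] * (𝐂[s, x])ᵀ = rankOneSum s (fun _ => 1) w x := by
  rw [rankOneSum_transpose]
  exact rankOneSum_mul_rankOneSum_of_subset subset_rfl (orthonormalOn_basisVec s)
    fun _ _ => one_mul _

end RankOneSum

lemma l2_opNorm_colMatrix_le {m : Type*} [Fintype m] {s : Finset ℕ} {w : ℕ → m → ℝ}
    (hw : OrthonormalOn s w) : ‖𝐂[s, w]‖ ≤ 1 :=
  l2_opNorm_le_one_of_transpose_mul_self_eq_one (transpose_colMatrix_mul_self hw)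

lemma l2_opNorm_one_sub_proj_le {n : Type*} [Fintype n] [DecidableEq n] {s : Finset ℕ}
    {x : ℕ → n → ℝ} (hx : OrthonormalOn s x) : ‖1 - 𝐏[s, x]‖ ≤ 1 := by
  refine l2_opNorm_le_one_of_transpose_mul_self_eq_self ?_
  have hP : 𝐏[s, x] * 𝐏[s, x] = 𝐏[s, x] :=
    rankOneSum_mul_rankOneSum_of_subset subset_rfl hx fun _ _ => one_mul 1
  rw [transpose_sub, transpose_one, rankOneSum_transpose, sub_mul, mul_sub, mul_sub, hP]
  simp

section RankOneSumNorm

variable {m n : Type*} [Fintype m] [Fintype n] [DecidableEq n] {s : Finset ℕ}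
  {c : ℕ → ℝ} {w : ℕ → m → ℝ} {x : ℕ → n → ℝ}

lemma l2_opNorm_rankOneSum_le (hw : OrthonormalOn s w) (hx : OrthonormalOn s x) {C : ℝ}
    (hC : 0 ≤ C) (hc : ∀ i ∈ s, |c i| ≤ C) : ‖rankOneSum s c w x‖ ≤ C := by
  have he := orthonormalOn_basisVec s
  have hfactor : rankOneSum s c w x =
      𝐂[s, w] * (rankOneSum s c (basisVec s) (basisVec s) * (𝐂[s, x])ᵀ) := by
    rw [rankOneSum_transpose,
      rankOneSum_mul_rankOneSum_of_subset subset_rfl he fun _ _ => mul_one _,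
      rankOneSum_mul_rankOneSum_of_subset subset_rfl he fun _ _ => one_mul _]
  have hdiag : ‖rankOneSum s c (basisVec s) (basisVec s)‖ ≤ C := by
    rw [rankOneSum_basisVec_basisVec, l2_opNorm_diagonal, pi_norm_le_iff_of_nonneg hC]
    exact fun i => hc i i.2
  rw [hfactor]
  calc _ ≤ 1 * (C * 1) :=
        l2_opNorm_mul_le_of_le (l2_opNorm_colMatrix_le hw) (l2_opNorm_mul_le_of_le hdiag
          ((l2_opNorm_transpose _).trans_le (l2_opNorm_colMatrix_le hx)))
    _ = C := by ring

lemma l2_opNorm_rankOneSum_pow_le (hw : OrthonormalOn s w) (hx : OrthonormalOn s x) {C : ℝ}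
    (hC : 0 ≤ C) (hc₀ : ∀ i ∈ s, 0 ≤ c i) (hc : ∀ i ∈ s, c i ≤ C) (k : ℕ) :
    ‖rankOneSum s (fun i => c i ^ k) w x‖ ≤ C ^ k :=
  l2_opNorm_rankOneSum_le hw hx (by positivity) fun i hi => by
    rw [abs_of_nonneg (pow_nonneg (hc₀ i hi) k)]
    exact pow_le_pow_left₀ (hc₀ i hi) (hc i hi) k

lemma l2_opNorm_rankOneSum_inv_pow_le (hw : OrthonormalOn s w) (hx : OrthonormalOn s x) {t : ℝ}
    (ht : 0 < t) (hc : ∀ i ∈ s, t ≤ c i) (k : ℕ) :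
    ‖rankOneSum s (fun i => (c i ^ k)⁻¹) w x‖ ≤ 1 / t ^ k :=
  l2_opNorm_rankOneSum_le hw hx (by positivity) fun i hi => by
    rw [abs_of_pos (inv_pos.2 (pow_pos (ht.trans_le (hc i hi)) k)), one_div]
    exact inv_anti₀ (pow_pos ht k) (pow_le_pow_left₀ ht.le (hc i hi) k)

lemma l2_opNorm_rankOneSum_le_of_nonneg (hw : OrthonormalOn s w) (hx : OrthonormalOn s x)
    {C : ℝ} (hC : 0 ≤ C) (hc₀ : ∀ i ∈ s, 0 ≤ c i) (hc : ∀ i ∈ s, c i ≤ C) :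
    ‖rankOneSum s c w x‖ ≤ C := by
  simpa using l2_opNorm_rankOneSum_pow_le hw hx hC hc₀ hc 1

lemma l2_opNorm_rankOneSum_inv_le (hw : OrthonormalOn s w) (hx : OrthonormalOn s x) {t : ℝ}
    (ht : 0 < t) (hc : ∀ i ∈ s, t ≤ c i) : ‖rankOneSum s (fun i => (c i)⁻¹) w x‖ ≤ 1 / t := by
  simpa using l2_opNorm_rankOneSum_inv_pow_le hw hx ht hc 1

end RankOneSumNorm

section SVD

open WithLp

variable {m n : Type*} [Fintype m] [Fintype n]

structure IsSVD (N : Matrix m n ℝ) (K : ℕ) (σ : ℕ → ℝ) (u : ℕ → m → ℝ) (v : ℕ → n → ℝ) :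
    Prop where
  orthonormalOn_left : OrthonormalOn (Icc 1 K) u
  orthonormalOn_right : OrthonormalOn (Icc 1 K) v
  nonneg : ∀ i ∈ Icc 1 K, 0 ≤ σ i
  antitoneOn : AntitoneOn σ (Icc 1 K : Finset ℕ)
  eq_rankOneSum : N = rankOneSum (Icc 1 K) σ u v

variable {N : Matrix m n ℝ} {K : ℕ} {σ : ℕ → ℝ} {u : ℕ → m → ℝ} {v : ℕ → n → ℝ}

lemma IsSVD.transpose (h : IsSVD N K σ u v) : IsSVD Nᵀ K σ v u :=
  ⟨h.orthonormalOn_right, h.orthonormalOn_left, h.nonneg, h.antitoneOn,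
    by rw [h.eq_rankOneSum, rankOneSum_transpose]⟩

lemma IsSVD.transpose_mul_self (h : IsSVD N K σ u v) :
    Nᵀ * N = rankOneSum (Icc 1 K) (fun i => σ i ^ 2) v v := by
  rw [h.eq_rankOneSum, rankOneSum_transpose]
  exact rankOneSum_mul_rankOneSum_of_subset subset_rfl h.orthonormalOn_left
    fun _ _ => (sq _).symm

lemma IsSVD.mul_rankOneSum_basisVec (h : IsSVD N K σ u v) {A : Finset ℕ} (hA : A ⊆ Icc 1 K)
    (c : ℕ → ℝ) :
    N * rankOneSum A c v (basisVec A) = rankOneSum A (fun i => σ i * c i) u (basisVec A) := by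
  rw [h.eq_rankOneSum]
  exact rankOneSum_mul_rankOneSum_of_superset hA h.orthonormalOn_right fun _ _ => rfl

lemma IsSVD.transpose_mul_self_mul_colMatrix (h : IsSVD N K σ u v) {A : Finset ℕ}
    (hA : A ⊆ Icc 1 K) :
    Nᵀ * N * 𝐂[A, v] = 𝐂[A, v] * rankOneSum A (fun i => σ i ^ 2) (basisVec A) (basisVec A) := by
  rw [h.transpose_mul_self,
    rankOneSum_mul_rankOneSum_of_superset hA h.orthonormalOn_right fun _ _ => mul_one _,
    rankOneSum_mul_rankOneSum_of_subset subset_rfl (orthonormalOn_basisVec A)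
      fun _ _ => one_mul _]

lemma IsSVD.mul_norm_le_norm_mulVec [DecidableEq n] (h : IsSVD N K σ u v) {r : ℕ}
    (hr : r ∈ Icc 1 K) (y : Icc 1 r → ℝ) :
    σ r * ‖toLp 2 y‖ ≤ ‖toLp 2 (N *ᵥ (𝐂[Icc 1 r, v] *ᵥ y))‖ := by
  have hR : Icc 1 r ⊆ Icc 1 K := Icc_subset_Icc le_rfl (mem_Icc.1 hr).2
  have hNB : N * 𝐂[Icc 1 r, v] =
      𝐂[Icc 1 r, u] * rankOneSum (Icc 1 r) σ (basisVec (Icc 1 r)) (basisVec (Icc 1 r)) := by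
    rw [h.mul_rankOneSum_basisVec hR,
      rankOneSum_mul_rankOneSum_of_subset subset_rfl (orthonormalOn_basisVec _)
        fun _ _ => one_mul _]
    exact rankOneSum_congr fun _ _ => mul_one _
  rw [mulVec_mulVec, hNB, ← mulVec_mulVec, norm_toLp_mulVec_of_transpose_mul_self_eq_one
    (transpose_colMatrix_mul_self (h.orthonormalOn_left.mono hR)), rankOneSum_basisVec_basisVec]
  exact mul_norm_toLp_le_diagonal_mulVec (h.nonneg r hr)
    (fun i => h.antitoneOn (hR i.2) hr (mem_Icc.1 i.2).2) y

lemma IsSVD.norm_mulVec_le [DecidableEq n] (h : IsSVD N K σ u v) {r : ℕ} (hr : 1 ≤ r)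
    (hσr : 0 ≤ σ r) {x : n → ℝ} (hx : ∀ i ∈ Icc 1 K, i < r → v i ⬝ᵥ x = 0) :
    ‖toLp 2 (N *ᵥ x)‖ ≤ σ r * ‖toLp 2 x‖ := by
  have hNx : N *ᵥ x = rankOneSum (Icc 1 K) (fun i => if i < r then 0 else σ i) u v *ᵥ x := by
    rw [h.eq_rankOneSum, rankOneSum_mulVec, rankOneSum_mulVec]
    refine sum_congr rfl fun i hi => ?_
    split_ifs with hir
    · simp [hx i hi hir]
    · rfl
  rw [hNx]
  refine (norm_toLp_mulVec_le _ x).trans (mul_le_mul_of_nonneg_right ?_ (norm_nonneg _))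
  refine l2_opNorm_rankOneSum_le h.orthonormalOn_left h.orthonormalOn_right hσr fun i hi => ?_
  split_ifs with hir
  · simpa using hσr
  · rw [abs_of_nonneg (h.nonneg i hi)]
    exact h.antitoneOn (mem_Icc.2 ⟨hr, (not_lt.1 hir).trans (mem_Icc.1 hi).2⟩) hi (not_lt.1 hir)

/-- Weyl's inequality. Some `x ≠ 0` in the span of the first `r` right singular vectors of `N₂`
is orthogonal to the first `r - 1` of `N₁`, by counting dimensions. -/
theorem IsSVD.le_add_l2_opNorm_sub [DecidableEq n] {N₁ N₂ : Matrix m n ℝ} {K₁ K₂ : ℕ}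
    {σ₁ σ₂ : ℕ → ℝ} {u₁ u₂ : ℕ → m → ℝ} {v₁ v₂ : ℕ → n → ℝ} (h₁ : IsSVD N₁ K₁ σ₁ u₁ v₁)
    (h₂ : IsSVD N₂ K₂ σ₂ u₂ v₂) {r : ℕ} (hr : r ∈ Icc 1 K₂) (hσ₁r : 0 ≤ σ₁ r) :
    σ₂ r ≤ σ₁ r + ‖N₂ - N₁‖ := by
  set H := (Icc 1 K₁).filter (· < r)
  set B := 𝐂[Icc 1 r, v₂]
  have hcard : Fintype.card H < Fintype.card (Icc 1 r) := by
    simp only [Fintype.card_coe, Nat.card_Icc]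
    calc H.card ≤ (Icc 1 (r - 1)).card := card_le_card fun i hi => by
          simp only [H, mem_filter, mem_Icc] at hi ⊢; omega
      _ < r + 1 - 1 := by rw [Nat.card_Icc]; have := (mem_Icc.1 hr).1; omega
  obtain ⟨y, hy0, hy⟩ :=
    exists_ne_zero_mulVec_eq_zero (A := Matrix.of (fun i : H => v₁ i) * B) hcard
  have horth : ∀ i ∈ Icc 1 K₁, i < r → v₁ i ⬝ᵥ (B *ᵥ y) = 0 := fun i hi hir => by
    rw [← mulVec_mulVec] at hy
    exact congrFun hy ⟨i, mem_filter.2 ⟨hi, hir⟩⟩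
  have hBy : ‖toLp 2 (B *ᵥ y)‖ = ‖toLp 2 y‖ := norm_toLp_mulVec_of_transpose_mul_self_eq_one
    (transpose_colMatrix_mul_self
      (h₂.orthonormalOn_right.mono (Icc_subset_Icc le_rfl (mem_Icc.1 hr).2))) y
  have hypos : 0 < ‖toLp 2 y‖ := norm_pos_iff.2 fun h0 => hy0 (by simpa using congrArg ofLp h0)
  have hsplit : N₂ *ᵥ (B *ᵥ y) = N₁ *ᵥ (B *ᵥ y) + (N₂ - N₁) *ᵥ (B *ᵥ y) := by
    rw [sub_mulVec]
    abel
  have hlow := h₂.mul_norm_le_norm_mulVec hr y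
  have hhigh := h₁.norm_mulVec_le (mem_Icc.1 hr).1 hσ₁r horth
  have hdiff := norm_toLp_mulVec_le (N₂ - N₁) (B *ᵥ y)
  have htri := norm_add_le (toLp 2 (N₁ *ᵥ (B *ᵥ y))) (toLp 2 ((N₂ - N₁) *ᵥ (B *ᵥ y)))
  rw [hsplit, toLp_add] at hlow
  rw [hBy] at hhigh hdiff
  nlinarith

/-- The convention `σ 0 = ∞` is built in: for `a = 1` only the gap below `σ b` counts. -/
structure IsSpectralGap (σ : ℕ → ℝ) (a b : ℕ) (g : ℝ) : Prop where
  le_sub_succ : g ≤ σ b - σ (b + 1)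
  le_pred_sub : a ≠ 1 → g ≤ σ (a - 1) - σ a

lemma IsSVD.le_of_isSpectralGap (h : IsSVD N K σ u v) {a b : ℕ} {g : ℝ}
    (hg : IsSpectralGap σ a b g) (ha : 1 ≤ a) (hbK : b ≤ K) (hσb : 0 ≤ σ (b + 1)) {j : ℕ}
    (hj : j ∈ Icc a b) : g ≤ σ j := by
  have hσj := h.antitoneOn (Icc_subset_Icc ha hbK hj)
    (mem_Icc.2 ⟨ha.trans ((mem_Icc.1 hj).1.trans (mem_Icc.1 hj).2), hbK⟩) (mem_Icc.1 hj).2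
  linarith [hg.le_sub_succ]

end SVD

section Sylvester

variable {α γ ι : Type*} [Fintype α] [Fintype γ] [Fintype ι]
  {P T : Matrix γ α ℝ} {W : Matrix α ι ℝ} {Λ : Matrix ι ι ℝ}

lemma sylvester_identity_tail [DecidableEq ι] {Q G : Matrix α α ℝ} {Λ' : Matrix ι ι ℝ}
    (hQ : Q * (Pᵀ * P) = G * Q) (hW : Tᵀ * T * W = W * Λ) (hΛ : Λ * Λ' = 1) :
    Q * W = G * (Q * W) * Λ' - Q * Pᵀ * ((P - T) * (W * Λ')) - Q * (P - T)ᵀ * (T * (W * Λ')) := by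
  set D := P - T with hD
  have hT : Tᵀ * T = Pᵀ * P - Pᵀ * D - Dᵀ * T := by
    rw [hD, transpose_sub, Matrix.mul_sub, Matrix.sub_mul]
    abel
  have hQ' : Q * Pᵀ * P = G * Q := by rw [Matrix.mul_assoc, hQ]
  calc Q * W = Q * (Tᵀ * T * W) * Λ' := by
        rw [hW, Matrix.mul_assoc, Matrix.mul_assoc, hΛ, Matrix.mul_one]
    _ = _ := by
        rw [hT]
        simp only [Matrix.sub_mul, Matrix.mul_sub, ← Matrix.mul_assoc, hQ']

lemma sylvester_identity_head {Q R : Matrix α α ℝ} (hQ : Q * (Pᵀ * P) = R) (hQR : Q * R = Q)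
    (hW : Tᵀ * T * W = W * Λ) :
    R * W = Q * (R * W) * Λ + Q * Pᵀ * ((P - T) * W) + Q * (P - T)ᵀ * (T * W) := by
  have hT : Pᵀ * P = Tᵀ * T + Pᵀ * (P - T) + (P - T)ᵀ * T := by
    rw [transpose_sub, Matrix.mul_sub, Matrix.sub_mul]
    abel
  calc R * W = Q * (Pᵀ * P) * W := by rw [hQ]
    _ = _ := by
        rw [hT, ← Matrix.mul_assoc Q R W, hQR, Matrix.mul_assoc Q W Λ, ← hW]
        simp only [Matrix.add_mul, Matrix.mul_add, Matrix.mul_assoc]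

lemma l2_opNorm_le_div_sub_of_sylvester [DecidableEq α] [DecidableEq γ] [DecidableEq ι]
    {Z : Matrix α ι ℝ} {G : Matrix α α ℝ} {D : Matrix γ α ℝ} {X₁ : Matrix α γ ℝ} {Y₁ : Matrix α ι ℝ}
    {X₂ : Matrix α α ℝ} {Y₂ : Matrix γ ι ℝ} {s t : ℝ} (hs : 0 ≤ s) (hst : s < t)
    (hZ : ‖Z‖ ≤ ‖G * Z * Λ‖ + ‖X₁ * (D * Y₁)‖ + ‖X₂ * Dᵀ * Y₂‖)
    (hGΛ : ‖G‖ * ‖Λ‖ ≤ s ^ 2 / t ^ 2) (hXY : ‖X₁‖ * ‖Y₁‖ + ‖X₂‖ * ‖Y₂‖ ≤ s / t ^ 2 + 1 / t) :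
    ‖Z‖ ≤ ‖D‖ / (t - s) := by
  refine le_div_sub_of_le_sq_div_sq_mul_add hs hst (hZ.trans ?_)
  have h₀ : ‖G * Z * Λ‖ ≤ ‖G‖ * ‖Λ‖ * ‖Z‖ := by
    have := l2_opNorm_mul_le_of_le (l2_opNorm_mul G Z) (le_refl ‖Λ‖)
    linarith
  have h₁ : ‖X₁ * (D * Y₁)‖ ≤ ‖X₁‖ * ‖Y₁‖ * ‖D‖ := by
    have := l2_opNorm_mul_le_of_le (le_refl ‖X₁‖) (l2_opNorm_mul D Y₁)
    linarith
  have h₂ : ‖X₂ * Dᵀ * Y₂‖ ≤ ‖X₂‖ * ‖Y₂‖ * ‖D‖ := by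
    have := l2_opNorm_mul_le_of_le (l2_opNorm_mul X₂ Dᵀ) (le_refl ‖Y₂‖)
    rw [l2_opNorm_transpose] at this
    linarith
  nlinarith [mul_le_mul_of_nonneg_right hGΛ (norm_nonneg Z),
    mul_le_mul_of_nonneg_right hXY (norm_nonneg D)]

end Sylvester

section SinTheta

variable {α γ : Type*} [Fintype α] [Fintype γ] [DecidableEq α]
  {P T : Matrix γ α ℝ} {KP KT : ℕ} {τ σ : ℕ → ℝ} {φ ψ : ℕ → γ → ℝ} {χ ω : ℕ → α → ℝ}
  {H A : Finset ℕ}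

lemma IsSVD.one_sub_proj_mul_transpose (hP : IsSVD P KP τ φ χ) (hH : H ⊆ Icc 1 KP) :
    (1 - 𝐏[H, χ]) * Pᵀ = rankOneSum (Icc 1 KP \ H) τ χ φ := by
  rw [hP.eq_rankOneSum, rankOneSum_transpose, Matrix.sub_mul, Matrix.one_mul,
    rankOneSum_mul_rankOneSum_of_subset hH hP.orthonormalOn_right fun _ _ => one_mul _,
    ← rankOneSum_sdiff_add hH, add_sub_cancel_right]

lemma IsSVD.one_sub_proj_mul_transpose_mul_self (hP : IsSVD P KP τ φ χ) (hH : H ⊆ Icc 1 KP) :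
    (1 - 𝐏[H, χ]) * (Pᵀ * P) =
      rankOneSum (Icc 1 KP \ H) (fun j => τ j ^ 2) χ χ * (1 - 𝐏[H, χ]) := by
  rw [Matrix.mul_sub (rankOneSum _ _ _ _), Matrix.mul_one,
    rankOneSum_mul_rankOneSum hP.orthonormalOn_right sdiff_subset hH, sdiff_inter_self,
    rankOneSum_empty, sub_zero, ← Matrix.mul_assoc, hP.one_sub_proj_mul_transpose hH,
    hP.eq_rankOneSum]
  exact rankOneSum_mul_rankOneSum_of_subset sdiff_subset hP.orthonormalOn_left
    fun _ _ => (sq _).symm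

/-- Wedin's sin θ bound, via a Sylvester equation between the Gram matrices `PᵀP` and `TᵀT`. -/
theorem IsSVD.norm_one_sub_proj_mul_le [DecidableEq γ] (hP : IsSVD P KP τ φ χ)
    (hT : IsSVD T KT σ ψ ω) (hH : H ⊆ Icc 1 KP) (hA : A ⊆ Icc 1 KT) {s t : ℝ} (hs : 0 ≤ s)
    (hst : s < t) (hτ : ∀ j ∈ Icc 1 KP \ H, τ j ≤ s) (hσ : ∀ j ∈ A, t ≤ σ j) :
    ‖(1 - 𝐏[H, χ]) * 𝐂[A, ω]‖ ≤ ‖P - T‖ / (t - s) := by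
  have ht : 0 < t := hs.trans_lt hst
  have hσpos : ∀ j ∈ A, 0 < σ j := fun j hj => ht.trans_le (hσ j hj)
  have he := orthonormalOn_basisVec A
  have hL : Icc 1 KP \ H ⊆ Icc 1 KP := sdiff_subset
  have hχL := hP.orthonormalOn_right.mono hL
  have hτ₀ : ∀ j ∈ Icc 1 KP \ H, 0 ≤ τ j := fun j hj => hP.nonneg j (hL hj)
  have hΛ : rankOneSum A (fun j => σ j ^ 2) (basisVec A) (basisVec A) *
      rankOneSum A (fun j => (σ j ^ 2)⁻¹) (basisVec A) (basisVec A) = 1 := by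
    rw [rankOneSum_mul_rankOneSum_of_subset subset_rfl he
      fun j hj => mul_inv_cancel₀ (pow_pos (hσpos j hj) 2).ne', rankOneSum_basisVec_basisVec,
      diagonal_one]
  have hid := sylvester_identity_tail (hP.one_sub_proj_mul_transpose_mul_self hH)
    (hT.transpose_mul_self_mul_colMatrix hA) hΛ
  refine l2_opNorm_le_div_sub_of_sylvester hs hst
    ((congrArg norm hid).trans_le (norm_sub_le_of_le (norm_sub_le _ _) le_rfl)) ?_ ?_
  · calc _ ≤ s ^ 2 * (1 / t ^ 2) :=
          mul_le_mul (l2_opNorm_rankOneSum_pow_le hχL hχL hs hτ₀ hτ 2)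
            (l2_opNorm_rankOneSum_inv_pow_le he he ht hσ 2) (norm_nonneg _) (sq_nonneg s)
      _ = s ^ 2 / t ^ 2 := by ring
  · rw [hP.one_sub_proj_mul_transpose hH,
      rankOneSum_mul_rankOneSum_of_subset subset_rfl he fun _ _ => one_mul _,
      hT.mul_rankOneSum_basisVec hA,
      rankOneSum_congr (c := fun j => σ j * (σ j ^ 2)⁻¹) (d := fun j => (σ j)⁻¹)
        fun j hj => by have := (hσpos j hj).ne'; field_simp]
    calc _ ≤ s * (1 / t ^ 2) + 1 * (1 / t) :=
          add_le_add (mul_le_mul (l2_opNorm_rankOneSum_le_of_nonneg hχL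
            (hP.orthonormalOn_left.mono hL) hs hτ₀ hτ) (l2_opNorm_rankOneSum_inv_pow_le
              (hT.orthonormalOn_right.mono hA) he ht hσ 2) (norm_nonneg _) hs)
            (mul_le_mul (l2_opNorm_one_sub_proj_le (hP.orthonormalOn_right.mono hH))
              (l2_opNorm_rankOneSum_inv_le (hT.orthonormalOn_left.mono hA) he ht hσ)
              (norm_nonneg _) zero_le_one)
      _ = s / t ^ 2 + 1 / t := by ring

theorem IsSVD.norm_proj_mul_le [DecidableEq γ] (hP : IsSVD P KP τ φ χ) (hT : IsSVD T KT σ ψ ω)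
    (hH : H ⊆ Icc 1 KP) (hA : A ⊆ Icc 1 KT) {s t : ℝ} (hs : 0 ≤ s) (hst : s < t)
    (hτ : ∀ j ∈ H, t ≤ τ j) (hσ : ∀ j ∈ A, σ j ≤ s) :
    ‖𝐏[H, χ] * 𝐂[A, ω]‖ ≤ ‖P - T‖ / (t - s) := by
  have ht : 0 < t := hs.trans_lt hst
  have hτpos : ∀ j ∈ H, 0 < τ j := fun j hj => ht.trans_le (hτ j hj)
  have hχ := hP.orthonormalOn_right.mono hH
  have he := orthonormalOn_basisVec A
  have hσ₀ : ∀ j ∈ A, 0 ≤ σ j := fun j hj => hT.nonneg j (hA hj)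
  have hQPP : rankOneSum H (fun j => (τ j ^ 2)⁻¹) χ χ * (Pᵀ * P) = 𝐏[H, χ] := by
    rw [hP.transpose_mul_self]
    exact rankOneSum_mul_rankOneSum_of_subset hH hP.orthonormalOn_right
      fun j hj => inv_mul_cancel₀ (pow_pos (hτpos j hj) 2).ne'
  have hQR : rankOneSum H (fun j => (τ j ^ 2)⁻¹) χ χ * 𝐏[H, χ] =
      rankOneSum H (fun j => (τ j ^ 2)⁻¹) χ χ :=
    rankOneSum_mul_rankOneSum_of_subset subset_rfl hχ fun _ _ => mul_one _
  have hid := sylvester_identity_head hQPP hQR (hT.transpose_mul_self_mul_colMatrix hA)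
  have hQ := l2_opNorm_rankOneSum_inv_pow_le hχ hχ ht hτ 2
  refine l2_opNorm_le_div_sub_of_sylvester hs hst ((congrArg norm hid).trans_le norm_add₃_le)
    ?_ ?_
  · calc _ ≤ 1 / t ^ 2 * s ^ 2 :=
          mul_le_mul hQ (l2_opNorm_rankOneSum_pow_le he he hs hσ₀ hσ 2) (norm_nonneg _)
            (by positivity)
      _ = s ^ 2 / t ^ 2 := by ring
  · rw [hP.eq_rankOneSum, rankOneSum_transpose,
      rankOneSum_mul_rankOneSum_of_subset hH hP.orthonormalOn_right (e := fun j => (τ j)⁻¹)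
        fun j hj => by have := (hτpos j hj).ne'; field_simp,
      hT.mul_rankOneSum_basisVec hA,
      rankOneSum_congr (c := fun j => σ j * 1) (d := σ) fun _ _ => mul_one _]
    calc _ ≤ 1 / t * 1 + 1 / t ^ 2 * s :=
          add_le_add (mul_le_mul (l2_opNorm_rankOneSum_inv_le hχ (hP.orthonormalOn_left.mono hH)
            ht hτ) (l2_opNorm_colMatrix_le (hT.orthonormalOn_right.mono hA)) (norm_nonneg _)
              (by positivity))
            (mul_le_mul hQ (l2_opNorm_rankOneSum_le_of_nonneg (hT.orthonormalOn_left.mono hA) he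
              hs hσ₀ hσ) (norm_nonneg _) (by positivity))
      _ = s / t ^ 2 + 1 / t := by ring

theorem IsSVD.norm_one_sub_proj_Icc_mul_le [DecidableEq γ] (hP : IsSVD P KP τ φ χ)
    (hT : IsSVD T KT σ ψ ω) {a b : ℕ} (ha : 1 ≤ a) (hab : a ≤ b) (hbP : b ≤ KP) (hbT : b ≤ KT)
    {s δ : ℝ} (hs : 0 ≤ s) (hδ : 0 < δ) (hhead : a ≠ 1 → σ a + δ ≤ τ (a - 1))
    (htail : b < KP → τ (b + 1) ≤ s) (hsb : s + δ ≤ σ b) :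
    ‖(1 - 𝐏[Icc a b, χ]) * 𝐂[Icc a b, ω]‖ ≤ 2 * ‖P - T‖ / δ := by
  have hA : Icc a b ⊆ Icc 1 KT := Icc_subset_Icc ha hbT
  have hbK : b ∈ Icc 1 KT := mem_Icc.2 ⟨ha.trans hab, hbT⟩
  have hsplit : 1 - 𝐏[Icc a b, χ] = 𝐏[Icc 1 (a - 1), χ] + (1 - 𝐏[Icc 1 b, χ]) := by
    have hdiff : Icc 1 b \ Icc a b = Icc 1 (a - 1) := by
      ext j
      simp only [mem_sdiff, mem_Icc]
      omega
    rw [← rankOneSum_sdiff_add (Icc_subset_Icc ha le_rfl : Icc a b ⊆ Icc 1 b), hdiff]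
    abel
  rw [hsplit, Matrix.add_mul, show 2 * ‖P - T‖ / δ = ‖P - T‖ / δ + ‖P - T‖ / δ by ring]
  refine (norm_add_le _ _).trans (add_le_add ?_ ?_)
  · rcases eq_or_ne a 1 with rfl | ha1
    · rw [show Icc 1 (1 - 1) = ∅ by simp, rankOneSum_empty, Matrix.zero_mul, norm_zero]
      positivity
    have haK : a ∈ Icc 1 KT := mem_Icc.2 ⟨ha, hab.trans hbT⟩
    have hH : Icc 1 (a - 1) ⊆ Icc 1 KP := Icc_subset_Icc le_rfl (by omega)
    refine (hP.norm_proj_mul_le hT hH hA (hT.nonneg a haK) (by linarith [hhead ha1])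
      (fun j hj => hP.antitoneOn (hH hj) (mem_Icc.2 ⟨by omega, by omega⟩) (mem_Icc.1 hj).2)
      (fun j hj => hT.antitoneOn haK (hA hj) (mem_Icc.1 hj).1)).trans ?_
    exact div_le_div_of_nonneg_left (norm_nonneg _) hδ (by linarith [hhead ha1])
  · refine (hP.norm_one_sub_proj_mul_le hT (Icc_subset_Icc le_rfl hbP) hA hs (by linarith)
      (fun j hj => ?_) (fun j hj => hT.antitoneOn (hA hj) hbK (mem_Icc.1 hj).2)).trans ?_
    · simp only [mem_sdiff, mem_Icc, not_and, not_le] at hj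
      exact (hP.antitoneOn (mem_Icc.2 ⟨by omega, by omega⟩) (mem_Icc.2 hj.1) (by omega)).trans
        (htail (by omega))
    · exact div_le_div_of_nonneg_left (norm_nonneg _) hδ (by linarith)

end SinTheta

section Remainder

variable {m n : Type*} [Fintype m] [Fintype n] [DecidableEq n] {M E : Matrix m n ℝ}
  {k K a b : ℕ} {σ σhat : ℕ → ℝ} {u uhat : ℕ → m → ℝ} {v vhat : ℕ → n → ℝ}

/-- The paper's remainder `S_{a:b}`; `V`, `Vab`, `Vhat` stand for `V`, `V_{a:b}`, `V̂_{a:b}`. -/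
noncomputable def projectorRemainder (E : Matrix m n ℝ) (σ : ℕ → ℝ) (u : ℕ → m → ℝ)
    (v : ℕ → n → ℝ) {k a b : ℕ} (V : Matrix n (Icc 1 k) ℝ) (Vab Vhat : Matrix n (Icc a b) ℝ) :
    Matrix n (Icc a b) ℝ :=
  (1 - V * Vᵀ) * (Vhat * Vhatᵀ - Vab * Vabᵀ) * Vab -
    ∑ j ∈ Icc a b, (σ j)⁻¹ • ((1 - V * Vᵀ) * Eᵀ * vecMulVec (u j) (v j) * Vab)

lemma projectorRemainder_eq (hv : OrthonormalOn (Icc 1 k) v) (hab : Icc a b ⊆ Icc 1 k) :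
    projectorRemainder E σ u v 𝐂[Icc 1 k, v] 𝐂[Icc a b, v] 𝐂[Icc a b, vhat] =
      (1 - 𝐏[Icc 1 k, v]) * 𝐂[Icc a b, vhat] * ((𝐂[Icc a b, vhat])ᵀ * 𝐂[Icc a b, v]) -
        (1 - 𝐏[Icc 1 k, v]) * Eᵀ * rankOneSum (Icc a b) (fun j => (σ j)⁻¹) u v *
          𝐂[Icc a b, v] := by
  rw [projectorRemainder, colMatrix_mul_transpose, ← mul_rankOneSum_mul, Matrix.mul_sub,
    Matrix.sub_mul, ← Matrix.mul_assoc _ 𝐂[Icc a b, v],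
    one_sub_rankOneSum_mul_rankOneSum_eq_zero hv hab, Matrix.zero_mul, Matrix.zero_mul, sub_zero,
    ← Matrix.mul_assoc _ 𝐂[Icc a b, vhat], Matrix.mul_assoc _ _ 𝐂[Icc a b, v]]

lemma projectorRemainder_eq_of_pos (hM : IsSVD M k σ u v) (hMh : IsSVD (M + E) K σhat uhat vhat)
    (hak : Icc a b ⊆ Icc 1 k) (haK : Icc a b ⊆ Icc 1 K) (hσhat : ∀ j ∈ Icc a b, 0 < σhat j) :
    projectorRemainder E σ u v 𝐂[Icc 1 k, v] 𝐂[Icc a b, v] 𝐂[Icc a b, vhat] =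
      (1 - 𝐏[Icc 1 k, v]) * Eᵀ * (rankOneSum (Icc a b) (fun j => (σhat j)⁻¹) uhat vhat -
        rankOneSum (Icc a b) (fun j => (σ j)⁻¹) u v) * 𝐂[Icc a b, v] := by
  set Ghat := rankOneSum (Icc a b) (fun j => (σhat j)⁻¹) uhat (basisVec (Icc a b))
  have hVhat : 𝐂[Icc a b, vhat] = (M + E)ᵀ * Ghat := by
    rw [hMh.eq_rankOneSum, rankOneSum_transpose]
    exact (rankOneSum_mul_rankOneSum_of_superset haK hMh.orthonormalOn_left
      fun j hj => mul_inv_cancel₀ (hσhat j hj).ne').symm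
  have hPM : (1 - 𝐏[Icc 1 k, v]) * (M + E)ᵀ = (1 - 𝐏[Icc 1 k, v]) * Eᵀ := by
    rw [transpose_add, Matrix.mul_add, hM.eq_rankOneSum, rankOneSum_transpose,
      one_sub_rankOneSum_mul_rankOneSum_eq_zero hM.orthonormalOn_right subset_rfl, zero_add]
  have hGV : Ghat * (𝐂[Icc a b, vhat])ᵀ = rankOneSum (Icc a b) (fun j => (σhat j)⁻¹) uhat vhat := by
    rw [rankOneSum_transpose]
    exact rankOneSum_mul_rankOneSum_of_subset subset_rfl (orthonormalOn_basisVec _)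
      fun _ _ => mul_one _
  have hPVhat : (1 - 𝐏[Icc 1 k, v]) * 𝐂[Icc a b, vhat] = (1 - 𝐏[Icc 1 k, v]) * Eᵀ * Ghat := by
    rw [hVhat, ← Matrix.mul_assoc, hPM]
  rw [projectorRemainder_eq hM.orthonormalOn_right hak, ← Matrix.mul_assoc, hPVhat,
    Matrix.mul_assoc _ Ghat, hGV, Matrix.mul_sub (_ * Eᵀ), Matrix.sub_mul _ _ 𝐂[Icc a b, v]]

lemma norm_rankOneSum_inv_sub_le [DecidableEq m] (hM : IsSVD M k σ u v)
    (hMh : IsSVD (M + E) K σhat uhat vhat) {A : Finset ℕ} (hAk : A ⊆ Icc 1 k)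
    (hAK : A ⊆ Icc 1 K) {β δ : ℝ} (hβ : 0 < β) (hσ : ∀ j ∈ A, β ≤ σ j)
    (hσhat : ∀ j ∈ A, β ≤ σhat j) (hu : ‖(1 - 𝐏[A, u]) * 𝐂[A, uhat]‖ ≤ δ)
    (hv : ‖(1 - 𝐏[A, vhat]) * 𝐂[A, v]‖ ≤ δ) :
    ‖rankOneSum A (fun j => (σhat j)⁻¹) uhat vhat - rankOneSum A (fun j => (σ j)⁻¹) u v‖ ≤
      2 * δ / β + ‖E‖ / β ^ 2 := by
  have he := orthonormalOn_basisVec A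
  set F := rankOneSum A (fun j => (σ j)⁻¹) u v
  set Fhat := rankOneSum A (fun j => (σhat j)⁻¹) uhat vhat
  have hFM : F * Mᵀ = 𝐏[A, u] := by
    rw [hM.eq_rankOneSum, rankOneSum_transpose]
    exact rankOneSum_mul_rankOneSum_of_subset hAk hM.orthonormalOn_right
      fun j hj => inv_mul_cancel₀ (hβ.trans_le (hσ j hj)).ne'
  have hMF : (M + E)ᵀ * Fhat = 𝐏[A, vhat] := by
    rw [hMh.eq_rankOneSum, rankOneSum_transpose]
    exact rankOneSum_mul_rankOneSum_of_superset hAK hMh.orthonormalOn_left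
      fun j hj => mul_inv_cancel₀ (hβ.trans_le (hσhat j hj)).ne'
  have hid : Fhat - F = (1 - F * Mᵀ) * Fhat - F * (1 - (M + E)ᵀ * Fhat) - F * Eᵀ * Fhat := by
    simp only [Matrix.mul_sub, Matrix.sub_mul, Matrix.mul_one, Matrix.one_mul, transpose_add,
      Matrix.mul_add, Matrix.add_mul, Matrix.mul_assoc]
    abel
  have hFhat : Fhat = 𝐂[A, uhat] * rankOneSum A (fun j => (σhat j)⁻¹) (basisVec A) vhat :=
    (rankOneSum_mul_rankOneSum_of_subset subset_rfl he fun _ _ => one_mul _).symm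
  have hF : F = rankOneSum A (fun j => (σ j)⁻¹) u (basisVec A) * (𝐂[A, v])ᵀ := by
    rw [rankOneSum_transpose]
    exact (rankOneSum_mul_rankOneSum_of_subset subset_rfl he fun _ _ => mul_one _).symm
  have hVP : ‖(𝐂[A, v])ᵀ * (1 - 𝐏[A, vhat])‖ ≤ δ := by
    rwa [← l2_opNorm_transpose, transpose_mul, transpose_transpose, transpose_sub, transpose_one,
      rankOneSum_transpose]
  have hσinv := l2_opNorm_rankOneSum_inv_le (hM.orthonormalOn_left.mono hAk) he hβ hσ
  have hσhatinv := l2_opNorm_rankOneSum_inv_le he (hMh.orthonormalOn_right.mono hAK) hβ hσhat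
  rw [hid, hFM, hMF]
  calc _ ≤ ‖(1 - 𝐏[A, u]) * Fhat‖ + ‖F * (1 - 𝐏[A, vhat])‖ + ‖F * Eᵀ * Fhat‖ :=
        norm_sub_le_of_le (norm_sub_le _ _) le_rfl
    _ ≤ δ * (1 / β) + 1 / β * δ + 1 / β * ‖E‖ * (1 / β) := by
        refine add_le_add (add_le_add ?_ ?_) ?_
        · rw [hFhat, ← Matrix.mul_assoc]
          exact l2_opNorm_mul_le_of_le hu hσhatinv
        · rw [hF, Matrix.mul_assoc]
          exact l2_opNorm_mul_le_of_le hσinv hVP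
        · exact l2_opNorm_mul_le_of_le (l2_opNorm_mul_le_of_le
            (l2_opNorm_rankOneSum_inv_le (hM.orthonormalOn_left.mono hAk)
              (hM.orthonormalOn_right.mono hAk) hβ hσ) (l2_opNorm_transpose E).le)
            (l2_opNorm_rankOneSum_inv_le (hMh.orthonormalOn_left.mono hAK)
              (hMh.orthonormalOn_right.mono hAK) hβ hσhat)
    _ = 2 * δ / β + ‖E‖ / β ^ 2 := by ring

lemma IsSVD.norm_one_sub_proj_perturbed_mul_le [DecidableEq m] (hM : IsSVD M k σ u v)
    (hMh : IsSVD (M + E) K σhat uhat vhat) (hkK : k ≤ K) (ha : 1 ≤ a) (hab : a ≤ b)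
    (hbk : b ≤ k) {g : ℝ} (hg : IsSpectralGap σ a b g) (hσb : 0 ≤ σ (b + 1)) (hε : ‖E‖ < g) :
    ‖(1 - 𝐏[Icc a b, vhat]) * 𝐂[Icc a b, v]‖ ≤ 2 * ‖E‖ / (g - ‖E‖) := by
  have h := hMh.norm_one_sub_proj_Icc_mul_le hM ha hab (hbk.trans hkK) hbk
    (add_nonneg hσb (norm_nonneg E)) (sub_pos.2 hε) (fun ha1 => ?_) (fun hbK => ?_)
    (by linarith [hg.le_sub_succ])
  · rwa [add_sub_cancel_left] at h
  · have hweyl := hMh.le_add_l2_opNorm_sub hM (r := a - 1) (mem_Icc.2 ⟨by omega, by omega⟩)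
      (hMh.nonneg _ (mem_Icc.2 ⟨by omega, by omega⟩))
    rw [sub_add_cancel_left, norm_neg] at hweyl
    linarith [hg.le_pred_sub ha1]
  · have hweyl := hM.le_add_l2_opNorm_sub hMh (r := b + 1) (mem_Icc.2 ⟨by omega, by omega⟩) hσb
    rwa [add_sub_cancel_left] at hweyl

lemma IsSVD.norm_one_sub_proj_mul_perturbed_le [DecidableEq m] (hM : IsSVD M k σ u v)
    (hMh : IsSVD (M + E) K σhat uhat vhat) (hkK : k ≤ K) (ha : 1 ≤ a) (hab : a ≤ b)
    (hbk : b ≤ k) {g : ℝ} (hg : IsSpectralGap σ a b g) (hσb : 0 ≤ σ (b + 1)) (hε : ‖E‖ < g) :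
    ‖(1 - 𝐏[Icc a b, u]) * 𝐂[Icc a b, uhat]‖ ≤ 2 * ‖E‖ / (g - ‖E‖) := by
  have h := hM.transpose.norm_one_sub_proj_Icc_mul_le hMh.transpose ha hab hbk (hbk.trans hkK)
    hσb (sub_pos.2 hε) (fun ha1 => ?_) (fun _ => le_rfl) ?_
  · rwa [← transpose_sub, l2_opNorm_transpose, sub_add_cancel_left, norm_neg] at h
  · have hweyl := hM.le_add_l2_opNorm_sub hMh (r := a) (mem_Icc.2 ⟨ha, by omega⟩)
      (hM.nonneg a (mem_Icc.2 ⟨ha, by omega⟩))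
    rw [add_sub_cancel_left] at hweyl
    linarith [hg.le_pred_sub ha1]
  · have hweyl := hMh.le_add_l2_opNorm_sub hM (r := b) (mem_Icc.2 ⟨by omega, hbk⟩)
      (hMh.nonneg b (mem_Icc.2 ⟨by omega, by omega⟩))
    rw [sub_add_cancel_left, norm_neg] at hweyl
    linarith [hg.le_sub_succ]

lemma norm_projectorRemainder_le_one_add [DecidableEq m] (hM : IsSVD M k σ u v)
    (hvhat : OrthonormalOn (Icc a b) vhat) (hak : Icc a b ⊆ Icc 1 k) {β : ℝ} (hβ : 0 < β)
    (hσ : ∀ j ∈ Icc a b, β ≤ σ j) :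
    ‖projectorRemainder E σ u v 𝐂[Icc 1 k, v] 𝐂[Icc a b, v] 𝐂[Icc a b, vhat]‖ ≤ 1 + ‖E‖ / β := by
  have hv := hM.orthonormalOn_right
  have hP := l2_opNorm_one_sub_proj_le hv
  have hV := l2_opNorm_colMatrix_le (hv.mono hak)
  have hVhat := l2_opNorm_colMatrix_le hvhat
  rw [projectorRemainder_eq hv hak]
  calc _ ≤ 1 * 1 * (1 * 1) + 1 * ‖E‖ * (1 / β) * 1 :=
        norm_sub_le_of_le (l2_opNorm_mul_le_of_le (l2_opNorm_mul_le_of_le hP hVhat)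
          (l2_opNorm_mul_le_of_le ((l2_opNorm_transpose _).trans_le hVhat) hV))
          (l2_opNorm_mul_le_of_le (l2_opNorm_mul_le_of_le (l2_opNorm_mul_le_of_le hP
            (l2_opNorm_transpose E).le) (l2_opNorm_rankOneSum_inv_le
              (hM.orthonormalOn_left.mono hak) (hv.mono hak) hβ hσ)) hV)
    _ = 1 + ‖E‖ / β := by ring

lemma norm_projectorRemainder_le_of_lt [DecidableEq m] (hM : IsSVD M k σ u v)
    (hMh : IsSVD (M + E) K σhat uhat vhat) (hkK : k ≤ K) (ha : 1 ≤ a) (hab : a ≤ b)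
    (hbk : b ≤ k) {g : ℝ} (hg : IsSpectralGap σ a b g) (hσb : 0 ≤ σ (b + 1)) (hε : ‖E‖ < g) :
    ‖projectorRemainder E σ u v 𝐂[Icc 1 k, v] 𝐂[Icc a b, v] 𝐂[Icc a b, vhat]‖ ≤
      5 * ‖E‖ ^ 2 / (g - ‖E‖) ^ 2 := by
  have hβ : 0 < g - ‖E‖ := sub_pos.2 hε
  have hak : Icc a b ⊆ Icc 1 k := Icc_subset_Icc ha hbk
  have haK : Icc a b ⊆ Icc 1 K := hak.trans (Icc_subset_Icc le_rfl hkK)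
  have hb : b ∈ Icc a b := mem_Icc.2 ⟨hab, le_rfl⟩
  have hσ : ∀ j ∈ Icc a b, g - ‖E‖ ≤ σ j := fun j hj => by
    linarith [hM.le_of_isSpectralGap hg ha hbk hσb hj, norm_nonneg E]
  have hσhat : ∀ j ∈ Icc a b, g - ‖E‖ ≤ σhat j := fun j hj => by
    have hweyl := hMh.le_add_l2_opNorm_sub hM (hak hb) (hMh.nonneg b (haK hb))
    rw [sub_add_cancel_left, norm_neg] at hweyl
    linarith [hMh.antitoneOn (haK hj) (haK hb) (mem_Icc.1 hj).2,
      hM.le_of_isSpectralGap hg ha hbk hσb hb]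
  have hF := norm_rankOneSum_inv_sub_le hM hMh hak haK hβ hσ hσhat
    (hM.norm_one_sub_proj_mul_perturbed_le hMh hkK ha hab hbk hg hσb hε)
    (hM.norm_one_sub_proj_perturbed_mul_le hMh hkK ha hab hbk hg hσb hε)
  rw [projectorRemainder_eq_of_pos hM hMh hak haK fun j hj => hβ.trans_le (hσhat j hj)]
  calc _ ≤ 1 * ‖E‖ * (2 * (2 * ‖E‖ / (g - ‖E‖)) / (g - ‖E‖) + ‖E‖ / (g - ‖E‖) ^ 2) * 1 :=
        l2_opNorm_mul_le_of_le (l2_opNorm_mul_le_of_le (l2_opNorm_mul_le_of_le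
          (l2_opNorm_one_sub_proj_le hM.orthonormalOn_right) (l2_opNorm_transpose E).le) hF)
          (l2_opNorm_colMatrix_le (hM.orthonormalOn_right.mono hak))
    _ = 5 * ‖E‖ ^ 2 / (g - ‖E‖) ^ 2 := by field_simp; ring

theorem norm_projectorRemainder_le [DecidableEq m] (hM : IsSVD M k σ u v)
    (hMh : IsSVD (M + E) K σhat uhat vhat) (hkK : k ≤ K) (ha : 1 ≤ a) (hab : a ≤ b)
    (hbk : b ≤ k) {g : ℝ} (hg : IsSpectralGap σ a b g) (hgpos : 0 < g) (hσb : 0 ≤ σ (b + 1)) :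
    ‖projectorRemainder E σ u v 𝐂[Icc 1 k, v] 𝐂[Icc a b, v] 𝐂[Icc a b, vhat]‖ ≤
      16 * ‖E‖ ^ 2 / g ^ 2 := by
  have hε := norm_nonneg E
  rcases le_or_gt ‖E‖ (g / 3) with hsmall | hlarge
  · refine (norm_projectorRemainder_le_of_lt hM hMh hkK ha hab hbk hg hσb (by linarith)).trans ?_
    rw [div_le_div_iff₀ (by nlinarith) (by positivity)]
    nlinarith [mul_nonneg (sq_nonneg ‖E‖) (sq_nonneg g), mul_nonneg (sq_nonneg ‖E‖) hε]
  · have hak : Icc a b ⊆ Icc 1 k := Icc_subset_Icc ha hbk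
    refine (norm_projectorRemainder_le_one_add hM (hMh.orthonormalOn_right.mono
      (hak.trans (Icc_subset_Icc le_rfl hkK))) hak hgpos
      fun j hj => hM.le_of_isSpectralGap hg ha hbk hσb hj).trans ?_
    rw [show 1 + ‖E‖ / g = (g ^ 2 + ‖E‖ * g) / g ^ 2 by field_simp,
      div_le_div_iff_of_pos_right (by positivity)]
    nlinarith [mul_pos (sub_pos.2 hlarge) (by positivity : 0 < 16 * ‖E‖ + 13 * g / 3)]

end Remainder

variable (p n k a b : ℕ)
variable (V : Matrix (Fin n) {i // i ∈ Finset.Icc 1 k} ℝ)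
variable (Vab Vhatab : Matrix (Fin n) {i // i ∈ Finset.Icc a b} ℝ)
variable (S : Matrix (Fin n) {i // i ∈ Finset.Icc a b} ℝ)
variable (M E : Matrix (Fin p) (Fin n) ℝ)
variable (σ : ℕ → ℝ) (u : ℕ → Fin p → ℝ) (v : ℕ → Fin n → ℝ)

theorem spectral_projector_remainder_bound (hk : k ≤ min p n)
    (hσpos : ∀ i ∈ Finset.Icc 1 k, 0 < σ i)
    (hσmono : ∀ i ∈ Finset.Icc 1 k, ∀ i' ∈ Finset.Icc 1 k, i ≤ i' → σ i' ≤ σ i)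
    (hσtop : σ (k + 1) = 0)
    (hu : ∀ i ∈ Finset.Icc 1 k, ∀ i' ∈ Finset.Icc 1 k,
      ∑ x, u i x * u i' x = if i = i' then (1 : ℝ) else 0)
    (hv : ∀ i ∈ Finset.Icc 1 k, ∀ i' ∈ Finset.Icc 1 k,
      ∑ y, v i y * v i' y = if i = i' then (1 : ℝ) else 0)
    (hM : M = ∑ i ∈ Finset.Icc 1 k, σ i • Matrix.vecMulVec (u i) (v i))
    -- an SVD of the perturbed matrix M + E
    (σhat : ℕ → ℝ) (uhat : ℕ → Fin p → ℝ) (vhat : ℕ → Fin n → ℝ)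
    (hσhatnn : ∀ i ∈ Finset.Icc 1 (min p n), 0 ≤ σhat i)
    (hσhatmono : ∀ i ∈ Finset.Icc 1 (min p n), ∀ i' ∈ Finset.Icc 1 (min p n),
      i ≤ i' → σhat i' ≤ σhat i)
    (huhat : ∀ i ∈ Finset.Icc 1 (min p n), ∀ i' ∈ Finset.Icc 1 (min p n),
      ∑ x, uhat i x * uhat i' x = if i = i' then (1 : ℝ) else 0)
    (hvhat : ∀ i ∈ Finset.Icc 1 (min p n), ∀ i' ∈ Finset.Icc 1 (min p n),
      ∑ y, vhat i y * vhat i' y = if i = i' then (1 : ℝ) else 0)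
    (hMhat : M + E = ∑ i ∈ Finset.Icc 1 (min p n),
      σhat i • Matrix.vecMulVec (uhat i) (vhat i))
    (ha : 1 ≤ a) (hab : a ≤ b) (hbk : b ≤ k)
    -- the singular value gap, with the convention σ₀ = +∞
    (g : ℝ) (hgpos : 0 < g)
    (hg : g = if a = 1 then σ b - σ (b + 1)
              else min (σ (a - 1) - σ a) (σ b - σ (b + 1)))
    (hV : ∀ x i, V x i = v i.1 x)
    (hVab : ∀ x i, Vab x i = v i.1 x)
    (hVhatab : ∀ x i, Vhatab x i = vhat i.1 x)
    (hS : S = (1 - V * Vᵀ) * (Vhatab * Vhatabᵀ - Vab * Vabᵀ) * Vab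
        - ∑ j ∈ Finset.Icc a b,
            (σ j)⁻¹ • ((1 - V * Vᵀ) * Eᵀ * Matrix.vecMulVec (u j) (v j) * Vab)) :
    opNorm S ≤ (32 * (σ a - σ b) / (Real.pi * g) + 16) * opNorm E ^ 2 / g ^ 2 := by
  have hMsvd : IsSVD M k σ u v := ⟨hu, hv, fun i hi => (hσpos i hi).le, hσmono, hM⟩
  have hMEsvd : IsSVD (M + E) (min p n) σhat uhat vhat :=
    ⟨huhat, hvhat, hσhatnn, hσhatmono, hMhat⟩
  have hgap : IsSpectralGap σ a b g := by
    refine ⟨?_, fun ha1 => ?_⟩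
    · rw [hg]
      split_ifs
      exacts [le_rfl, min_le_right _ _]
    · rw [hg, if_neg ha1]
      exact min_le_left _ _
  have hσb : 0 ≤ σ (b + 1) := by
    rcases hbk.eq_or_lt with rfl | hlt
    · exact hσtop.ge
    · exact hMsvd.nonneg _ (mem_Icc.2 ⟨by omega, hlt⟩)
  have hσab : σ b ≤ σ a := hMsvd.antitoneOn (mem_Icc.2 ⟨ha, hab.trans hbk⟩)
    (mem_Icc.2 ⟨ha.trans hab, hbk⟩) hab
  obtain rfl := eq_colMatrix hV
  obtain rfl := eq_colMatrix hVab
  obtain rfl := eq_colMatrix hVhatab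
  rw [hS, opNorm_eq_l2_opNorm, opNorm_eq_l2_opNorm]
  calc _ ≤ 16 * ‖E‖ ^ 2 / g ^ 2 :=
        norm_projectorRemainder_le hMsvd hMEsvd hk ha hab hbk hgap hgpos hσb
    _ ≤ _ := by
        gcongr
        have : 0 ≤ 32 * (σ a - σ b) / (Real.pi * g) :=
          div_nonneg (by linarith) (by positivity)
        linarith
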